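/- arXiv:2109.13982 — 3 statements merged into one kernel-verified Lean document; each statement's English description precedes it below -/
import Mathlib

section
/- Fix l > 0 and m ≥ 1. For λ = (λ₁,…,λ_m) with λ₁ > ⋯ > λ_m > 0 and w = (w₁,…,w_{m−1}) with w_j > 0 and Σ_{j=1}^{m−1} w_j < 1, set w_m = 1 − Σ_{j=1}^{m−1} w_j and define real numbers κ₀(λ,w),…,κ_{2m}(λ,w) as the coefficients of the polynomial identity Σ_{j=0}^{2m} κ_j z^j = ∏_{j=1}^m (z² − λ_j²) − l·z·Σ_{j=1}^m w_j ∏_{k≠j} (z² − λ_k²). (When (λ_j, w_j) are the eigenvalues and weights of the spectral measure Σ (w_j/2)(δ_{λ_j}+δ_{−λ_j}) of a 2m×2m zero-diagonal Jacobi matrix 𝒥 with positive off-diagonals, this polynomial equals det(zI − 𝒥 − l·I_{1×1}); in particular κ_{2m} = 1 and κ_{2m−1} = −l.) Then the Jacobian determinant of the smooth map (λ₁,…,λ_m, w₁,…,w_{m−1}) ↦ (κ₀,…,κ_{2m−2}) from this open subset of ℝ^{2m−1} to ℝ^{2m−1} satisfies |det ∂(κ₀,…,κ_{2m−2})/∂(λ₁,…,λ_m,w₁,…,w_{m−1})|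 = 2^m l^{m−1} ∏_{j=1}^m λ_j · ∏_{1≤j<k≤m} |λ_j² − λ_k²|². -/
open MeasureTheory Matrix Polynomial Finset

/-- The polynomial `∏ (z² - λ_j²) - l·z·Σ_j w_j ∏_{k≠j} (z² - λ_k²)`, which is
`det(zI - 𝒥 - l·I₁ₓ₁)` when `(λ_j, w_j)` are the eigenvalues and weights of the spectral
measure `Σ (w_j/2)(δ_{λ_j}+δ_{-λ_j})` of a `2m × 2m` zero-diagonal Jacobi matrix `𝒥`. -/
noncomputable def kappaPolyH (m : ℕ) (l : ℝ) (lam : Fin m → ℝ) (w : Fin m → ℝ) :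
    Polynomial ℝ :=
  ∏ j : Fin m, (X ^ 2 - C (lam j ^ 2)) -
    C l * X * ∑ j : Fin m, C (w j) * ∏ k ∈ Finset.univ.erase j, (X ^ 2 - C (lam k ^ 2))

/-- `kappaPolyH` as a function of a single vector `x ∈ ℝ^(2m-1)` of variables
`(λ₁,…,λ_m, w₁,…,w_{m-1})`, with `w_m := 1 - Σ_{j<m} w_j`. -/
noncomputable def kappaMapH (m : ℕ) (l : ℝ) (x : Fin (2 * m - 1) → ℝ) : Polynomial ℝ :=
  kappaPolyH m l
    (fun j => x ⟨(j : ℕ), by have := j.isLt; omega⟩)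
    (fun j => if h : (j : ℕ) < m - 1 then x ⟨m + (j : ℕ), by omega⟩
      else 1 - ∑ k : Fin (m - 1), x ⟨m + (k : ℕ), by have := k.isLt; omega⟩)


-- coefficient helpers
lemma coeff_exp_even (p : ℝ[X]) (i : ℕ) : ((Polynomial.expand ℝ 2) p).coeff (2 * i) = p.coeff i :=
  Polynomial.coeff_expand_mul' (by norm_num) p i

lemma coeff_exp_odd (p : ℝ[X]) (i : ℕ) : ((Polynomial.expand ℝ 2) p).coeff (2 * i + 1) = 0 := by
  rw [Polynomial.coeff_expand (by norm_num), if_neg (by omega)]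

lemma coeff_CXexp_even (a : ℝ) (p : ℝ[X]) (i : ℕ) :
    (C a * X * (Polynomial.expand ℝ 2) p).coeff (2 * i) = 0 := by
  rw [mul_assoc, coeff_C_mul]
  rcases Nat.eq_zero_or_pos i with rfl | hi
  · simp
  · have h2 : 2 * i = (2 * (i - 1) + 1) + 1 := by omega
    rw [h2, coeff_X_mul, coeff_exp_odd, mul_zero]

lemma coeff_CXexp_odd (a : ℝ) (p : ℝ[X]) (i : ℕ) :
    (C a * X * (Polynomial.expand ℝ 2) p).coeff (2 * i + 1) = a * p.coeff i := by
  rw [mul_assoc, coeff_C_mul, coeff_X_mul, coeff_exp_even]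

-- Vandermonde times coefficient matrix
lemma vandermonde_mul_coeff {N : ℕ} (v : Fin N → ℝ) (p : Fin N → ℝ[X]) (d : Fin N → ℝ)
    (hdeg : ∀ j, (p j).natDegree < N)
    (heval : ∀ k j, (p j).eval (v k) = if k = j then d k else 0) :
    vandermonde v * Matrix.of (fun i j : Fin N => (p j).coeff i) = Matrix.diagonal d := by
  ext k j
  rw [Matrix.mul_apply, Matrix.diagonal_apply]
  have h1 : ∑ i : Fin N, vandermonde v k i * (p j).coeff i = (p j).eval (v k) := by
    rw [Polynomial.eval_eq_sum_range' (hdeg j), ← Fin.sum_univ_eq_sum_range]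
    exact Finset.sum_congr rfl fun i _ => by rw [vandermonde_apply, mul_comm]
  simp only [Matrix.of_apply] at *
  rw [h1, heval]

lemma abs_det_coeff {N : ℕ} (v : Fin N → ℝ) (p : Fin N → ℝ[X]) (d : Fin N → ℝ)
    (hdeg : ∀ j, (p j).natDegree < N)
    (heval : ∀ k j, (p j).eval (v k) = if k = j then d k else 0) :
    |(Matrix.of (fun i j : Fin N => (p j).coeff i)).det| * |(vandermonde v).det| =
      ∏ k, |d k| := by
  have h := congrArg Matrix.det (vandermonde_mul_coeff v p d hdeg heval)
  rw [Matrix.det_mul, Matrix.det_diagonal] at h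
  rw [mul_comm, ← abs_mul, h, Finset.abs_prod]

lemma Ioi_castSucc' {n : ℕ} (j : Fin n) :
    (Finset.Ioi j.castSucc : Finset (Fin (n + 1))) =
      insert (Fin.last n) ((Finset.Ioi j).image Fin.castSucc) := by
  ext r
  simp only [Finset.mem_Ioi, Finset.mem_insert, Finset.mem_image]
  constructor
  · intro h
    by_cases hn : (r : ℕ) = n
    · exact Or.inl (Fin.ext (by simpa using hn))
    · have hr := r.isLt
      have hjr : (j : ℕ) < (r : ℕ) := by simpa [Fin.lt_def] using h
      exact Or.inr ⟨⟨r, by omega⟩, by simpa [Fin.lt_def] using hjr, Fin.ext rfl⟩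
  · rintro (rfl | ⟨a, ha, rfl⟩)
    · exact Fin.castSucc_lt_last j
    · exact Fin.castSucc_lt_castSucc_iff.mpr ha

lemma Ioi_last' {n : ℕ} : (Finset.Ioi (Fin.last n) : Finset (Fin (n + 1))) = ∅ := by
  ext r
  simp only [Finset.mem_Ioi, Finset.notMem_empty, iff_false]
  exact not_lt.mpr (Fin.le_last r)

lemma last_notMem_image {n : ℕ} (s : Finset (Fin n)) :
    Fin.last n ∉ s.image Fin.castSucc := by
  simp only [Finset.mem_image, not_exists, not_and]
  intro a _
  exact fun h => absurd (congrArg Fin.val h) (by simp [Fin.ext_iff]; omega)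

lemma prod_Ioi_castSucc {n : ℕ} (f : Fin (n + 1) → ℝ) (j : Fin n) :
    ∏ k ∈ Finset.Ioi j.castSucc, f k = f (Fin.last n) * ∏ k ∈ Finset.Ioi j, f k.castSucc := by
  rw [Ioi_castSucc', Finset.prod_insert (last_notMem_image _),
    Finset.prod_image (fun a _ b _ h => Fin.castSucc_injective n h)]

lemma prod_Ioi_pairs_split {n : ℕ} (g : Fin (n + 1) → Fin (n + 1) → ℝ) :
    ∏ j : Fin (n + 1), ∏ k ∈ Finset.Ioi j, g j k =
      (∏ j : Fin n, ∏ k ∈ Finset.Ioi j, g j.castSucc k.castSucc) *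
        ∏ j : Fin n, g j.castSucc (Fin.last n) := by
  rw [Fin.prod_univ_castSucc, Ioi_last', Finset.prod_empty, mul_one, ← Finset.prod_mul_distrib]
  exact Finset.prod_congr rfl fun j _ => by rw [prod_Ioi_castSucc]; ring

lemma erase_castSucc' {n : ℕ} (j : Fin n) :
    (Finset.univ.erase j.castSucc : Finset (Fin (n + 1))) =
      insert (Fin.last n) ((Finset.univ.erase j).image Fin.castSucc) := by
  ext r
  simp only [Finset.mem_erase, Finset.mem_univ, and_true, Finset.mem_insert, Finset.mem_image]
  have hr := r.isLt
  have hj := j.isLt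
  constructor
  · intro h
    have h' : (r : ℕ) ≠ (j : ℕ) := fun hc => h (Fin.ext (by simpa using hc))
    by_cases hn : (r : ℕ) = n
    · exact Or.inl (Fin.ext (by simpa using hn))
    · refine Or.inr ⟨⟨r, by omega⟩, ⟨fun hc => ?_, Fin.ext rfl⟩⟩
      exact h' (by simpa [Fin.ext_iff] using hc)
  · rintro (rfl | ⟨a, ⟨ha, rfl⟩⟩)
    · intro hc
      have := congrArg Fin.val hc
      simp at this; omega
    · intro hc
      exact ha (Fin.castSucc_injective n hc)

lemma erase_last' {n : ℕ} :
    (Finset.univ.erase (Fin.last n) : Finset (Fin (n + 1))) =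
      Finset.univ.image Fin.castSucc := by
  ext r
  simp only [Finset.mem_erase, Finset.mem_univ, and_true, Finset.mem_image, true_and]
  have hr := r.isLt
  constructor
  · intro h
    have h' : (r : ℕ) ≠ n := fun hc => h (Fin.ext (by simpa using hc))
    exact ⟨⟨r, by omega⟩, Fin.ext rfl⟩
  · rintro ⟨a, rfl⟩
    intro hc
    have := congrArg Fin.val hc
    have ha := a.isLt
    simp at this; omega

lemma prod_erase_castSucc {n : ℕ} (F : Fin (n + 1) → ℝ) (j : Fin n) :
    ∏ r ∈ Finset.univ.erase j.castSucc, F r =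
      F (Fin.last n) * ∏ r ∈ Finset.univ.erase j, F r.castSucc := by
  rw [erase_castSucc', Finset.prod_insert (last_notMem_image _),
    Finset.prod_image (fun a _ b _ h => Fin.castSucc_injective n h)]

lemma prod_erase_last {n : ℕ} (F : Fin (n + 1) → ℝ) :
    ∏ r ∈ Finset.univ.erase (Fin.last n), F r = ∏ r : Fin n, F r.castSucc := by
  rw [erase_last', Finset.prod_image (fun a _ b _ h => Fin.castSucc_injective n h)]

/-- symmetrization of products over off-diagonal pairs -/
lemma prod_prod_erase_eq {N : ℕ} (f : Fin N → Fin N → ℝ) :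
    ∏ j, ∏ r ∈ Finset.univ.erase j, f j r =
      ∏ j, ∏ k ∈ Finset.Ioi j, (f j k * f k j) := by
  induction N with
  | zero => simp
  | succ n ih =>
    rw [Fin.prod_univ_castSucc, prod_erase_last, prod_Ioi_pairs_split]
    have hL : ∀ j : Fin n, ∏ r ∈ Finset.univ.erase j.castSucc, f j.castSucc r =
        f j.castSucc (Fin.last n) * ∏ r ∈ Finset.univ.erase j, f j.castSucc r.castSucc :=
      fun j => prod_erase_castSucc _ j
    calc (∏ j : Fin n, ∏ r ∈ Finset.univ.erase j.castSucc, f j.castSucc r) *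
          ∏ r : Fin n, f (Fin.last n) r.castSucc
        = (∏ j : Fin n, ∏ r ∈ Finset.univ.erase j, f j.castSucc r.castSucc) *
          ∏ j : Fin n, (f j.castSucc (Fin.last n) * f (Fin.last n) j.castSucc) := by
          simp only [hL, Finset.prod_mul_distrib]; ring
      _ = _ := by
          rw [ih (fun a b => f a.castSucc b.castSucc)]


/-- `∏_{k ≠ j} (X - C (μ k))` -/
noncomputable def qpoly {N : ℕ} (μ : Fin N → ℝ) (j : Fin N) : ℝ[X] :=
  ∏ k ∈ Finset.univ.erase j, (X - C (μ k))

lemma qpoly_monic {N : ℕ} (μ : Fin N → ℝ) (j : Fin N) : (qpoly μ j).Monic :=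
  monic_prod_of_monic _ _ fun k _ => monic_X_sub_C (μ k)

lemma qpoly_natDegree {N : ℕ} (μ : Fin N → ℝ) (j : Fin N) :
    (qpoly μ j).natDegree = N - 1 := by
  rw [qpoly, natDegree_prod_of_monic _ _ fun k _ => monic_X_sub_C (μ k)]
  simp [Finset.card_erase_of_mem]

lemma qpoly_coeff_top {N : ℕ} (μ : Fin N → ℝ) (j : Fin N) :
    (qpoly μ j).coeff (N - 1) = 1 := by
  have := (qpoly_monic μ j).coeff_natDegree
  rwa [qpoly_natDegree] at this

lemma qpoly_eval {N : ℕ} (μ : Fin N → ℝ) (j : Fin N) (x : ℝ) :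
    (qpoly μ j).eval x = ∏ k ∈ Finset.univ.erase j, (x - μ k) := by
  simp [qpoly, eval_prod]

lemma qpoly_eval_ne {N : ℕ} (μ : Fin N → ℝ) {j k : Fin N} (h : k ≠ j) :
    (qpoly μ j).eval (μ k) = 0 := by
  rw [qpoly_eval]
  exact Finset.prod_eq_zero (Finset.mem_erase.mpr ⟨h, Finset.mem_univ k⟩) (by ring)

lemma kappaPolyH_expand (m : ℕ) (l : ℝ) (lam w : Fin m → ℝ) :
    kappaPolyH m l lam w =
      (Polynomial.expand ℝ 2) (∏ j : Fin m, (X - C (lam j ^ 2))) -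
        C l * X * (Polynomial.expand ℝ 2)
          (∑ j : Fin m, C (w j) * qpoly (fun k => lam k ^ 2) j) := by
  rw [kappaPolyH, map_prod, map_sum]
  have h1 : ∀ a : ℝ, (Polynomial.expand ℝ 2) (X - C a) = X ^ 2 - C a := fun a => by
    rw [map_sub, Polynomial.expand_X, Polynomial.expand_C]
  simp only [h1]
  congr 1
  congr 1
  refine Finset.sum_congr rfl fun j _ => ?_
  rw [_root_.map_mul, Polynomial.expand_C, qpoly, map_prod]
  simp only [h1]


/-- `∏_{k ≠ i} (X² - C (lam k ²))` -/
noncomputable def Qf {N : ℕ} (lam : Fin N → ℝ) (i : Fin N) : ℝ[X] :=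
  ∏ k ∈ Finset.univ.erase i, (X ^ 2 - C (lam k ^ 2))

noncomputable def Rf {N : ℕ} (lam w : Fin N → ℝ) (j : Fin N) : ℝ[X] :=
  ∑ i ∈ Finset.univ.erase j, C (w i) *
    ∏ k ∈ (Finset.univ.erase i).erase j, (X ^ 2 - C (lam k ^ 2))

lemma kappaPolyH_update_lam {N : ℕ} (l : ℝ) (lam w : Fin N → ℝ) (j : Fin N) (t : ℝ) :
    kappaPolyH N l (Function.update lam j t) w =
      (X ^ 2 * Qf lam j - C l * X * (C (w j) * Qf lam j + X ^ 2 * Rf lam w j)) -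
        C (t ^ 2) * (Qf lam j - C l * X * Rf lam w j) := by
  rw [kappaPolyH]
  have hQ : ∏ k : Fin N, (X ^ 2 - C ((Function.update lam j t) k ^ 2)) =
      (X ^ 2 - C (t ^ 2)) * Qf lam j := by
    rw [← Finset.mul_prod_erase Finset.univ _ (Finset.mem_univ j), Function.update_self]
    congr 1
    exact Finset.prod_congr rfl fun k hk => by
      rw [Function.update_of_ne (Finset.mem_erase.mp hk).1]
  have hS : ∑ i : Fin N, C (w i) *
        ∏ k ∈ Finset.univ.erase i, (X ^ 2 - C ((Function.update lam j t) k ^ 2)) =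
      C (w j) * Qf lam j + (X ^ 2 - C (t ^ 2)) * Rf lam w j := by
    rw [← Finset.add_sum_erase Finset.univ _ (Finset.mem_univ j)]
    congr 1
    · congr 1
      exact Finset.prod_congr rfl fun k hk => by
        rw [Function.update_of_ne (Finset.mem_erase.mp hk).1]
    · rw [Rf, Finset.mul_sum]
      refine Finset.sum_congr rfl fun i hi => ?_
      have hji : j ∈ Finset.univ.erase i :=
        Finset.mem_erase.mpr ⟨Ne.symm (Finset.mem_erase.mp hi).1, Finset.mem_univ j⟩
      rw [← Finset.mul_prod_erase (Finset.univ.erase i) _ hji, Function.update_self]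
      have hrest : ∏ k ∈ (Finset.univ.erase i).erase j,
            (X ^ 2 - C ((Function.update lam j t) k ^ 2)) =
          ∏ k ∈ (Finset.univ.erase i).erase j, (X ^ 2 - C (lam k ^ 2)) :=
        Finset.prod_congr rfl fun k hk => by
          rw [Function.update_of_ne (Finset.mem_erase.mp hk).1]
      rw [hrest]; ring
  rw [hQ, hS]; ring

lemma sum_pm_mul {N : ℕ} (F : Fin N → ℝ[X]) (a b : Fin N) (hab : a ≠ b) :
    ∑ k : Fin N, C (if k = a then (1 : ℝ) else if k = b then -1 else 0) * F k = F a - F b := by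
  have key : ∀ k : Fin N, C (if k = a then (1 : ℝ) else if k = b then -1 else 0) * F k =
      (if k = a then F k else 0) + (if k = b then -F k else 0) := by
    intro k
    split_ifs with h1 h2 <;> simp_all
  rw [Finset.sum_congr rfl fun k _ => key k, Finset.sum_add_distrib]
  rw [Finset.sum_ite_eq' Finset.univ a F, Finset.sum_ite_eq' Finset.univ b (fun k => -F k)]
  simp [sub_eq_add_neg]

lemma kappaPolyH_w_shift {N : ℕ} (l : ℝ) (lam w : Fin N → ℝ) (a b : Fin N) (hab : a ≠ b)
    (s : ℝ) :
    kappaPolyH N l lam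
        (fun k => w k + s * (if k = a then 1 else if k = b then -1 else 0)) =
      kappaPolyH N l lam w - C s * (C l * X * (Qf lam a - Qf lam b)) := by
  rw [kappaPolyH, kappaPolyH]
  have hS : ∑ k : Fin N, C (w k + s * (if k = a then (1:ℝ) else if k = b then -1 else 0)) *
        ∏ r ∈ Finset.univ.erase k, (X ^ 2 - C (lam r ^ 2)) =
      (∑ k : Fin N, C (w k) * ∏ r ∈ Finset.univ.erase k, (X ^ 2 - C (lam r ^ 2))) +
        C s * (Qf lam a - Qf lam b) := by
    rw [← sum_pm_mul (fun k => Qf lam k) a b hab, Finset.mul_sum, ← Finset.sum_add_distrib]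
    refine Finset.sum_congr rfl fun k _ => ?_
    rw [Qf, C_add, C_mul]
    ring
  rw [hS]; ring

lemma Qf_expand {N : ℕ} (lam : Fin N → ℝ) (i : Fin N) :
    Qf lam i = (Polynomial.expand ℝ 2) (qpoly (fun k => lam k ^ 2) i) := by
  rw [Qf, qpoly, map_prod]
  exact Finset.prod_congr rfl fun k _ => by
    rw [map_sub, Polynomial.expand_X, Polynomial.expand_C]

lemma Rf_expand {N : ℕ} (lam w : Fin N → ℝ) (j : Fin N) :
    Rf lam w j = (Polynomial.expand ℝ 2)
      (∑ i ∈ Finset.univ.erase j, C (w i) *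
        ∏ k ∈ (Finset.univ.erase i).erase j, (X - C (lam k ^ 2))) := by
  rw [Rf, map_sum]
  refine Finset.sum_congr rfl fun i _ => ?_
  rw [_root_.map_mul, Polynomial.expand_C, map_prod]
  exact congrArg _ (Finset.prod_congr rfl fun k _ => by
    rw [map_sub, Polynomial.expand_X, Polynomial.expand_C])

def eL (n : ℕ) (j : Fin (n + 1)) : Fin (2 * (n + 1) - 1) :=
  ⟨(j : ℕ), by have := j.isLt; omega⟩

def eW (n : ℕ) (j : Fin n) : Fin (2 * (n + 1) - 1) :=
  ⟨n + 1 + (j : ℕ), by have := j.isLt; omega⟩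

noncomputable def wfun (n : ℕ) (y : Fin (2 * (n + 1) - 1) → ℝ) (k : Fin (n + 1)) : ℝ :=
  if h : (k : ℕ) < n then y (eW n ⟨(k : ℕ), h⟩) else 1 - ∑ r : Fin n, y (eW n r)

lemma kappaMapH_eq (n : ℕ) (l : ℝ) (y : Fin (2 * (n + 1) - 1) → ℝ) :
    kappaMapH (n + 1) l y = kappaPolyH (n + 1) l (fun j => y (eL n j)) (wfun n y) := rfl

lemma eW_ne_eL (n : ℕ) (r : Fin n) (j : Fin (n + 1)) : eW n r ≠ eL n j := by
  intro hc
  have := congrArg Fin.val hc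
  simp only [eW, eL] at this
  have := j.isLt
  omega

lemma jac_entry_lam (n : ℕ) (l : ℝ) (x : Fin (2 * (n + 1) - 1) → ℝ) (i : ℕ) (j : Fin (n + 1)) :
    deriv (fun t => (kappaMapH (n + 1) l (Function.update x (eL n j) t)).coeff i)
        (x (eL n j)) =
      (C (-2 * x (eL n j)) *
        (Qf (fun k => x (eL n k)) j -
          C l * X * Rf (fun k => x (eL n k)) (wfun n x) j)).coeff i := by
  set lamx : Fin (n + 1) → ℝ := fun k => x (eL n k) with hlamx
  have hup : ∀ t : ℝ, (fun k : Fin (n + 1) => Function.update x (eL n j) t (eL n k)) =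
      Function.update lamx j t := by
    intro t; funext k
    rcases eq_or_ne k j with rfl | hkj
    · simp [Function.update_self]
    · rw [Function.update_of_ne (fun hc : eL n k = eL n j => hkj (by
        have := congrArg Fin.val hc
        simp only [eL] at this
        exact Fin.ext this)), Function.update_of_ne hkj]
  have hw : ∀ t : ℝ, wfun n (Function.update x (eL n j) t) = wfun n x := by
    intro t; funext k
    rw [wfun, wfun]
    split
    · rw [Function.update_of_ne (eW_ne_eL n _ j)]
    · congr 1
      exact Finset.sum_congr rfl fun r _ => by rw [Function.update_of_ne (eW_ne_eL n r j)]
  have hdecomp : ∀ t : ℝ, kappaMapH (n + 1) l (Function.update x (eL n j) t) =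
      (X ^ 2 * Qf lamx j -
          C l * X * (C (wfun n x j) * Qf lamx j + X ^ 2 * Rf lamx (wfun n x) j)) -
        C (t ^ 2) * (Qf lamx j - C l * X * Rf lamx (wfun n x) j) := by
    intro t
    rw [kappaMapH_eq, hup t, hw t, kappaPolyH_update_lam]
  have hfun : (fun t => (kappaMapH (n + 1) l (Function.update x (eL n j) t)).coeff i) =
      fun t => (X ^ 2 * Qf lamx j -
          C l * X * (C (wfun n x j) * Qf lamx j + X ^ 2 * Rf lamx (wfun n x) j)).coeff i -
        t ^ 2 * (Qf lamx j - C l * X * Rf lamx (wfun n x) j).coeff i := by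
    funext t
    rw [hdecomp t, coeff_sub, coeff_C_mul]
  rw [hfun]
  have hd : HasDerivAt (fun t : ℝ =>
      (X ^ 2 * Qf lamx j -
          C l * X * (C (wfun n x j) * Qf lamx j + X ^ 2 * Rf lamx (wfun n x) j)).coeff i -
        t ^ 2 * (Qf lamx j - C l * X * Rf lamx (wfun n x) j).coeff i)
      (-(((2 : ℕ) * (x (eL n j)) ^ (2 - 1)) *
        (Qf lamx j - C l * X * Rf lamx (wfun n x) j).coeff i)) (x (eL n j)) :=
    ((hasDerivAt_pow 2 _).mul_const _).const_sub _
  rw [hd.deriv, coeff_C_mul]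
  push_cast
  ring

lemma jac_entry_w (n : ℕ) (l : ℝ) (x : Fin (2 * (n + 1) - 1) → ℝ) (i : ℕ) (j : Fin n) :
    deriv (fun t => (kappaMapH (n + 1) l (Function.update x (eW n j) t)).coeff i)
        (x (eW n j)) =
      (-(C l * X * (Qf (fun k => x (eL n k)) j.castSucc -
          Qf (fun k => x (eL n k)) (Fin.last n)))).coeff i := by
  set lamx : Fin (n + 1) → ℝ := fun k => x (eL n k) with hlamx
  have hup : ∀ t : ℝ, (fun k : Fin (n + 1) => Function.update x (eW n j) t (eL n k)) = lamx := by
    intro t; funext k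
    rw [Function.update_of_ne (Ne.symm (eW_ne_eL n j k))]
  have hw : ∀ t : ℝ, wfun n (Function.update x (eW n j) t) = fun k =>
      wfun n x k + (t - x (eW n j)) *
        (if k = j.castSucc then 1 else if k = Fin.last n then -1 else 0) := by
    intro t; funext k
    by_cases hk : (k : ℕ) < n
    · rw [wfun, wfun, dif_pos hk, dif_pos hk]
      rcases eq_or_ne k j.castSucc with rfl | hkj
      · have h1 : (⟨((j.castSucc : Fin (n+1)) : ℕ), hk⟩ : Fin n) = j := Fin.ext (by simp)
        rw [h1, Function.update_self, if_pos rfl]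
        ring
      · have h2 : eW n ⟨(k : ℕ), hk⟩ ≠ eW n j := by
          intro hc
          have := congrArg Fin.val hc
          simp only [eW] at this
          exact hkj (Fin.ext (by simpa using this))
        rw [Function.update_of_ne h2, if_neg hkj, if_neg (by
          intro hc
          have := congrArg Fin.val hc
          simp only [Fin.val_last] at this
          omega)]
        ring
    · rw [wfun, wfun, dif_neg hk, dif_neg hk]
      have hkcs : k ≠ j.castSucc := by
        intro hc
        have := congrArg Fin.val hc
        simp only [Fin.coe_castSucc] at this
        have := j.isLt
        omega
      have hklast : k = Fin.last n := Fin.ext (by have := k.isLt; simp [Fin.val_last]; omega)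
      rw [if_neg hkcs, if_pos hklast]
      have hsum : ∑ r : Fin n, Function.update x (eW n j) t (eW n r) =
          t + ∑ r ∈ Finset.univ.erase j, x (eW n r) := by
        have hcomp : ∀ r : Fin n, Function.update x (eW n j) t (eW n r) =
            Function.update (fun s : Fin n => x (eW n s)) j t r := by
          intro r
          rcases eq_or_ne r j with rfl | hrj
          · simp [Function.update_self]
          · rw [Function.update_of_ne (fun hc : eW n r = eW n j => hrj (by
              have := congrArg Fin.val hc
              simp only [eW] at this
              exact Fin.ext (by omega))), Function.update_of_ne hrj]
        rw [Finset.sum_congr rfl fun r _ => hcomp r]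
        rw [Finset.sum_update_of_mem (Finset.mem_univ j), Finset.sdiff_singleton_eq_erase]
      have hsum2 : ∑ r : Fin n, x (eW n r) =
          x (eW n j) + ∑ r ∈ Finset.univ.erase j, x (eW n r) :=
        (Finset.add_sum_erase _ _ (Finset.mem_univ j)).symm
      rw [hsum, hsum2]
      ring
  have hdecomp : ∀ t : ℝ, kappaMapH (n + 1) l (Function.update x (eW n j) t) =
      kappaPolyH (n + 1) l lamx (wfun n x) -
        C (t - x (eW n j)) * (C l * X * (Qf lamx j.castSucc - Qf lamx (Fin.last n))) := by
    intro t
    rw [kappaMapH_eq, hup t, hw t,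
      kappaPolyH_w_shift l lamx (wfun n x) j.castSucc (Fin.last n)
        (Fin.ne_last_of_lt (Fin.castSucc_lt_last j)) (t - x (eW n j))]
  have hfun : (fun t => (kappaMapH (n + 1) l (Function.update x (eW n j) t)).coeff i) =
      fun t => (kappaPolyH (n + 1) l lamx (wfun n x)).coeff i -
        (t - x (eW n j)) * (C l * X * (Qf lamx j.castSucc - Qf lamx (Fin.last n))).coeff i := by
    funext t
    rw [hdecomp t, coeff_sub, coeff_C_mul]
  rw [hfun]
  have hd : HasDerivAt (fun t : ℝ =>
      (kappaPolyH (n + 1) l lamx (wfun n x)).coeff i -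
        (t - x (eW n j)) * (C l * X * (Qf lamx j.castSucc - Qf lamx (Fin.last n))).coeff i)
      (-(1 * (C l * X * (Qf lamx j.castSucc - Qf lamx (Fin.last n))).coeff i)) (x (eW n j)) :=
    (((hasDerivAt_id _).sub_const _).mul_const _).const_sub _
  rw [hd.deriv, coeff_neg]
  ring

/-- row equivalence: even/odd interleaving -/
def erowEquiv (n : ℕ) : Fin (n + 1) ⊕ Fin n ≃ Fin (2 * (n + 1) - 1) where
  toFun := Sum.elim (fun i => ⟨2 * (i : ℕ), by have := i.isLt; omega⟩)
    (fun i => ⟨2 * (i : ℕ) + 1, by have := i.isLt; omega⟩)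
  invFun r := if h : (r : ℕ) % 2 = 0 then Sum.inl ⟨(r : ℕ) / 2, by have := r.isLt; omega⟩
    else Sum.inr ⟨(r : ℕ) / 2, by have := r.isLt; omega⟩
  left_inv := by
    rintro (i | i)
    · dsimp only [Sum.elim_inl]
      rw [dif_pos (show 2 * (i : ℕ) % 2 = 0 by omega)]
      congr 1
      apply Fin.ext
      show 2 * (i : ℕ) / 2 = (i : ℕ)
      omega
    · dsimp only [Sum.elim_inr]
      rw [dif_neg (show ¬(2 * (i : ℕ) + 1) % 2 = 0 by omega)]
      congr 1
      apply Fin.ext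
      show (2 * (i : ℕ) + 1) / 2 = (i : ℕ)
      omega
  right_inv := by
    intro r
    dsimp only
    by_cases h : (r : ℕ) % 2 = 0
    · rw [dif_pos h]
      dsimp only [Sum.elim_inl]
      apply Fin.ext
      show 2 * ((r : ℕ) / 2) = (r : ℕ)
      omega
    · rw [dif_neg h]
      dsimp only [Sum.elim_inr]
      apply Fin.ext
      show 2 * ((r : ℕ) / 2) + 1 = (r : ℕ)
      omega

/-- column equivalence: lambda-columns then w-columns -/
def ecolEquiv (n : ℕ) : Fin (n + 1) ⊕ Fin n ≃ Fin (2 * (n + 1) - 1) where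
  toFun := Sum.elim (fun j => eL n j) (fun j => eW n j)
  invFun r := if h : (r : ℕ) < n + 1 then Sum.inl ⟨(r : ℕ), h⟩
    else Sum.inr ⟨(r : ℕ) - (n + 1), by have := r.isLt; omega⟩
  left_inv := by
    rintro (j | j)
    · dsimp only [Sum.elim_inl, eL]
      rw [dif_pos (show (j : ℕ) < n + 1 from j.isLt)]
    · dsimp only [Sum.elim_inr, eW]
      rw [dif_neg (show ¬(n + 1 + (j : ℕ) < n + 1) by omega)]
      congr 1
      apply Fin.ext
      show n + 1 + (j : ℕ) - (n + 1) = (j : ℕ)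
      omega
  right_inv := by
    intro r
    dsimp only
    by_cases h : (r : ℕ) < n + 1
    · rw [dif_pos h]
      exact Fin.ext rfl
    · rw [dif_neg h]
      dsimp only [Sum.elim_inr, eW]
      apply Fin.ext
      show n + 1 + ((r : ℕ) - (n + 1)) = (r : ℕ)
      omega

lemma abs_det_main (n : ℕ) (l : ℝ) (hl : 0 < l) (lam : Fin (n + 1) → ℝ)
    (hpos : ∀ j, 0 < lam j) (hord : StrictAnti lam)
    (cp : Fin (2 * (n + 1) - 1) → ℝ[X])
    (hcpL : ∀ (j : Fin (n + 1)) (i : ℕ), (cp (eL n j)).coeff (2 * i) =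
      -2 * lam j * (qpoly (fun k => lam k ^ 2) j).coeff i)
    (hcpW0 : ∀ (j : Fin n) (i : ℕ), (cp (eW n j)).coeff (2 * i) = 0)
    (hcpW : ∀ (j : Fin n) (i : ℕ), (cp (eW n j)).coeff (2 * i + 1) =
      -l * ((qpoly (fun k => lam k ^ 2) j.castSucc).coeff i -
        (qpoly (fun k => lam k ^ 2) (Fin.last n)).coeff i)) :
    |(Matrix.of fun i j : Fin (2 * (n + 1) - 1) => (cp j).coeff (i : ℕ)).det| =
      2 ^ (n + 1) * l ^ n * (∏ j, lam j) *
        ∏ j : Fin (n + 1), ∏ k ∈ Finset.Ioi j, |lam j ^ 2 - lam k ^ 2| ^ 2 := by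
  set μ : Fin (n + 1) → ℝ := fun k => lam k ^ 2 with hμ
  have hμanti : StrictAnti μ := fun a b hab =>
    pow_lt_pow_left₀ (hord hab) (hpos b).le two_ne_zero
  have hμinj : Function.Injective μ := hμanti.injective
  set T : ℝ := ∏ j : Fin (n + 1), ∏ k ∈ Finset.Ioi j, |μ j - μ k| with hT
  have hT0 : T ≠ 0 := by
    rw [hT]
    refine Finset.prod_ne_zero_iff.mpr fun j _ => Finset.prod_ne_zero_iff.mpr fun k hk => ?_
    have : j ≠ k := (Finset.mem_Ioi.mp hk).ne
    simp only [abs_ne_zero, sub_ne_zero]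
    exact fun hc => this (hμinj hc)
  -- the matrix in block form
  rw [← Matrix.abs_det_submatrix_equiv_equiv (erowEquiv n) (ecolEquiv n)]
  set M := ((Matrix.of fun i j : Fin (2 * (n + 1) - 1) => (cp j).coeff (i : ℕ)).submatrix
    (erowEquiv n) (ecolEquiv n)) with hM
  have h12 : M.toBlocks₁₂ = 0 := by
    ext i j
    show M (Sum.inl i) (Sum.inr j) = 0
    show (cp (eW n j)).coeff ((2 * (i : ℕ) : ℕ)) = 0
    exact hcpW0 j (i : ℕ)
  have hblocks : M = Matrix.fromBlocks M.toBlocks₁₁ 0 M.toBlocks₂₁ M.toBlocks₂₂ := by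
    rw [← h12, Matrix.fromBlocks_toBlocks]
  rw [hblocks, Matrix.det_fromBlocks_zero₁₂, abs_mul]
  -- A block
  set M0 : Matrix (Fin (n + 1)) (Fin (n + 1)) ℝ :=
    Matrix.of fun i j => (qpoly μ j).coeff (i : ℕ) with hM0
  have hA : M.toBlocks₁₁ = Matrix.of fun i j : Fin (n + 1) => (-2 * lam j) * M0 i j := by
    ext i j
    show M (Sum.inl i) (Sum.inl j) = _
    show (cp (eL n j)).coeff ((2 * (i : ℕ) : ℕ)) = _
    rw [hcpL j (i : ℕ)]
    rfl
  have hdval : ∀ k : Fin (n + 1),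
      (qpoly μ k).eval (μ k) = ∏ r ∈ Finset.univ.erase k, (μ k - μ r) := fun k => qpoly_eval μ k _
  have habsM0 : |M0.det| * |(vandermonde μ).det| =
      ∏ k : Fin (n + 1), |∏ r ∈ Finset.univ.erase k, (μ k - μ r)| := by
    refine abs_det_coeff μ (qpoly μ) (fun k => ∏ r ∈ Finset.univ.erase k, (μ k - μ r)) ?_ ?_
    · intro j
      rw [qpoly_natDegree]
      omega
    · intro k j
      rcases eq_or_ne k j with rfl | hkj
      · rw [if_pos rfl, qpoly_eval]
      · rw [if_neg hkj, qpoly_eval_ne μ hkj]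
  have hVabs : |(vandermonde μ).det| = T := by
    rw [Matrix.det_vandermonde, Finset.abs_prod, hT]
    refine Finset.prod_congr rfl fun j _ => ?_
    rw [Finset.abs_prod]
    exact Finset.prod_congr rfl fun k _ => abs_sub_comm _ _
  have hdprod : ∏ k : Fin (n + 1), |∏ r ∈ Finset.univ.erase k, (μ k - μ r)| = T ^ 2 := by
    have h1 : ∀ k : Fin (n + 1), |∏ r ∈ Finset.univ.erase k, (μ k - μ r)| =
        ∏ r ∈ Finset.univ.erase k, |μ k - μ r| := fun k => Finset.abs_prod _ _
    rw [Finset.prod_congr rfl fun k _ => h1 k,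
      prod_prod_erase_eq (fun a b => |μ a - μ b|), hT, ← Finset.prod_pow]
    refine Finset.prod_congr rfl fun j _ => ?_
    rw [← Finset.prod_pow]
    refine Finset.prod_congr rfl fun k _ => ?_
    rw [abs_sub_comm (μ k) (μ j), sq]
  have hM0abs : |M0.det| = T := by
    have := habsM0
    rw [hVabs, hdprod, sq] at this
    exact mul_right_cancel₀ hT0 this
  have hAabs : |M.toBlocks₁₁.det| = 2 ^ (n + 1) * (∏ j, lam j) * T := by
    rw [hA, Matrix.det_mul_row, abs_mul, Finset.abs_prod, hM0abs]
    have : ∀ j : Fin (n + 1), |(-2 : ℝ) * lam j| = 2 * lam j := fun j => by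
      rw [abs_mul, abs_neg, abs_two, abs_of_pos (hpos j)]
    rw [Finset.prod_congr rfl fun j _ => this j, Finset.prod_mul_distrib, Finset.prod_const]
    simp [mul_assoc]
  -- C block
  set N0 : Matrix (Fin n) (Fin n) ℝ :=
    Matrix.of fun i j => (qpoly μ j.castSucc - qpoly μ (Fin.last n)).coeff (i : ℕ) with hN0
  have hC : M.toBlocks₂₂ = Matrix.of fun i j : Fin n => (-l) * N0 i j := by
    ext i j
    show M (Sum.inr i) (Sum.inr j) = _
    show (cp (eW n j)).coeff ((2 * (i : ℕ) + 1 : ℕ)) = _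
    rw [hcpW j (i : ℕ)]
    show _ = -l * ((qpoly μ j.castSucc - qpoly μ (Fin.last n)).coeff (i : ℕ))
    rw [coeff_sub]
  set T' : ℝ := ∏ j : Fin n, ∏ k ∈ Finset.Ioi j, |μ j.castSucc - μ k.castSucc| with hT'
  set E : ℝ := ∏ j : Fin n, |μ j.castSucc - μ (Fin.last n)| with hE
  have hTsplit : T = T' * E := by
    rw [hT, prod_Ioi_pairs_split (fun a b => |μ a - μ b|)]
  have hT'0 : T' ≠ 0 := by
    rw [hT']
    refine Finset.prod_ne_zero_iff.mpr fun j _ => Finset.prod_ne_zero_iff.mpr fun k hk => ?_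
    have : j ≠ k := (Finset.mem_Ioi.mp hk).ne
    simp only [abs_ne_zero, sub_ne_zero]
    exact fun hc => this (Fin.castSucc_injective n (hμinj hc))
  have habsN0 : |N0.det| * |(vandermonde (fun k : Fin n => μ k.castSucc)).det| =
      ∏ k : Fin n, |∏ r ∈ Finset.univ.erase k.castSucc, (μ k.castSucc - μ r)| := by
    refine abs_det_coeff (fun k : Fin n => μ k.castSucc)
      (fun j => qpoly μ j.castSucc - qpoly μ (Fin.last n))
      (fun k => ∏ r ∈ Finset.univ.erase k.castSucc, (μ k.castSucc - μ r)) ?_ ?_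
    · intro j
      have hn : 0 < n := j.pos
      by_cases h0 : qpoly μ j.castSucc - qpoly μ (Fin.last n) = 0
      · rw [h0, natDegree_zero]; omega
      · have hdeg : (qpoly μ j.castSucc - qpoly μ (Fin.last n)).degree < (n : ℕ) := by
          have h1 : (qpoly μ j.castSucc).degree = ((n : ℕ) : WithBot ℕ) := by
            rw [Polynomial.degree_eq_natDegree (qpoly_monic μ j.castSucc).ne_zero,
              qpoly_natDegree]
            norm_cast
          have h2 : (qpoly μ (Fin.last n)).degree = ((n : ℕ) : WithBot ℕ) := by
            rw [Polynomial.degree_eq_natDegree (qpoly_monic μ (Fin.last n)).ne_zero,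
              qpoly_natDegree]
            norm_cast
          have := Polynomial.degree_sub_lt (h1.trans h2.symm)
            (qpoly_monic μ j.castSucc).ne_zero
            ((qpoly_monic μ j.castSucc).leadingCoeff.trans
              (qpoly_monic μ (Fin.last n)).leadingCoeff.symm)
          rwa [h1] at this
        exact (Polynomial.natDegree_lt_iff_degree_lt h0).mpr hdeg
    · intro k j
      have hklast : k.castSucc ≠ Fin.last n := Fin.ne_last_of_lt (Fin.castSucc_lt_last k)
      rcases eq_or_ne k j with rfl | hkj
      · rw [if_pos rfl, eval_sub, qpoly_eval, qpoly_eval_ne μ hklast, sub_zero]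
      · have : k.castSucc ≠ j.castSucc := fun hc => hkj (Fin.castSucc_injective n hc)
        rw [if_neg hkj, eval_sub, qpoly_eval_ne μ this, qpoly_eval_ne μ hklast, sub_zero]
  have hV'abs : |(vandermonde (fun k : Fin n => μ k.castSucc)).det| = T' := by
    rw [Matrix.det_vandermonde, Finset.abs_prod, hT']
    refine Finset.prod_congr rfl fun j _ => ?_
    rw [Finset.abs_prod]
    exact Finset.prod_congr rfl fun k _ => abs_sub_comm _ _
  have hdprod' : ∏ k : Fin n, |∏ r ∈ Finset.univ.erase k.castSucc, (μ k.castSucc - μ r)| =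
      T' ^ 2 * E := by
    have h1 : ∀ k : Fin n, |∏ r ∈ Finset.univ.erase k.castSucc, (μ k.castSucc - μ r)| =
        |μ k.castSucc - μ (Fin.last n)| *
          ∏ r ∈ Finset.univ.erase k, |μ k.castSucc - μ r.castSucc| := fun k => by
      rw [Finset.abs_prod, prod_erase_castSucc]
    rw [Finset.prod_congr rfl fun k _ => h1 k, Finset.prod_mul_distrib, ← hE,
      prod_prod_erase_eq (fun a b : Fin n => |μ a.castSucc - μ b.castSucc|), hT']
    rw [← Finset.prod_pow]
    rw [mul_comm]
    congr 1
    refine Finset.prod_congr rfl fun j _ => ?_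
    rw [← Finset.prod_pow]
    refine Finset.prod_congr rfl fun k _ => ?_
    rw [abs_sub_comm (μ k.castSucc) (μ j.castSucc), sq]
  have hN0abs : |N0.det| = T := by
    have := habsN0
    rw [hV'abs, hdprod'] at this
    have h2 : |N0.det| * T' = T' * (T' * E) := by rw [this]; ring
    rw [hTsplit]
    exact mul_right_cancel₀ hT'0 (by rw [h2]; ring)
  have hCabs : |M.toBlocks₂₂.det| = l ^ n * T := by
    rw [hC, Matrix.det_mul_row, abs_mul, Finset.abs_prod, hN0abs]
    have : ∀ j : Fin n, |(-l : ℝ)| = l := fun j => by rw [abs_neg, abs_of_pos hl]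
    rw [Finset.prod_congr rfl fun j _ => this j, Finset.prod_const]
    simp
  rw [hAabs, hCabs]
  have hfinal : ∏ j : Fin (n + 1), ∏ k ∈ Finset.Ioi j, |lam j ^ 2 - lam k ^ 2| ^ 2 = T ^ 2 := by
    rw [hT, ← Finset.prod_pow]
    refine Finset.prod_congr rfl fun j _ => ?_
    rw [← Finset.prod_pow]
  rw [hfinal]
  ring

noncomputable def cpDef (n : ℕ) (l : ℝ) (x : Fin (2 * (n + 1) - 1) → ℝ)
    (j : Fin (2 * (n + 1) - 1)) : ℝ[X] :=
  if h : (j : ℕ) < n + 1 then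
    C (-2 * x (eL n ⟨(j : ℕ), h⟩)) *
      (Qf (fun k => x (eL n k)) ⟨(j : ℕ), h⟩ -
        C l * X * Rf (fun k => x (eL n k)) (wfun n x) ⟨(j : ℕ), h⟩)
  else -(C l * X * (Qf (fun k => x (eL n k))
      (Fin.castSucc ⟨(j : ℕ) - (n + 1), by have := j.isLt; omega⟩) -
    Qf (fun k => x (eL n k)) (Fin.last n)))

lemma cpDef_eL (n : ℕ) (l : ℝ) (x : Fin (2 * (n + 1) - 1) → ℝ) (j : Fin (n + 1)) :
    cpDef n l x (eL n j) = C (-2 * x (eL n j)) *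
      (Qf (fun k => x (eL n k)) j - C l * X * Rf (fun k => x (eL n k)) (wfun n x) j) := by
  rw [cpDef, dif_pos (show ((eL n j : ℕ)) < n + 1 from j.isLt)]
  rfl

lemma cpDef_eW (n : ℕ) (l : ℝ) (x : Fin (2 * (n + 1) - 1) → ℝ) (j : Fin n) :
    cpDef n l x (eW n j) = -(C l * X * (Qf (fun k => x (eL n k)) j.castSucc -
      Qf (fun k => x (eL n k)) (Fin.last n))) := by
  have hc : ¬((eW n j : ℕ) < n + 1) := by
    rw [show ((eW n j : ℕ)) = n + 1 + (j : ℕ) from rfl]; omega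
  rw [cpDef, dif_neg hc]
  have hmk : (⟨((eW n j : ℕ)) - (n + 1), by have := (eW n j).isLt; omega⟩ : Fin n) = j :=
    Fin.ext (show n + 1 + (j : ℕ) - (n + 1) = (j : ℕ) by omega)
  exact congrArg (fun z : Fin n => -(C l * X * (Qf (fun k => x (eL n k)) z.castSucc -
    Qf (fun k => x (eL n k)) (Fin.last n)))) hmk

lemma wsum_one (n : ℕ) (x : Fin (2 * (n + 1) - 1) → ℝ) :
    ∑ k : Fin (n + 1), wfun n x k = 1 := by
  rw [Fin.sum_univ_castSucc]
  have h1 : ∀ k : Fin n, wfun n x (Fin.castSucc k) = x (eW n k) := by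
    intro k
    rw [wfun, dif_pos (show ((Fin.castSucc k : Fin (n + 1)) : ℕ) < n from k.isLt)]
    exact congrArg (fun z => x (eW n z)) (Fin.ext rfl)
  have h2 : wfun n x (Fin.last n) = 1 - ∑ r : Fin n, x (eW n r) := by
    rw [wfun, dif_neg (by simp [Fin.val_last])]
  rw [Finset.sum_congr rfl fun k _ => h1 k, h2]
  ring

/-- the Jacobian of the change of variables
`(λ₁,…,λ_m, w₁,…,w_{m-1}) ↦ (κ₀,…,κ_{2m-2})` (Maclaurin coefficients of
`det(zI - 𝒥 - l·I₁ₓ₁)`) has absolute value `2^m l^{m-1} ∏ λ_j ∏_{j<k} |λ_j² - λ_k²|²`;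
moreover `κ_{2m} = 1` and `κ_{2m-1} = -l`. -/
theorem jacobian_hermitian_even (m : ℕ) (hm : 1 ≤ m) (l : ℝ) (hl : 0 < l)
    (x : Fin (2 * m - 1) → ℝ)
    (lam : Fin m → ℝ) (hlam : lam = fun j : Fin m => x ⟨(j : ℕ), by have := j.isLt; omega⟩)
    (hord : StrictAnti lam) (hpos : ∀ j, 0 < lam j)
    (hwpos : ∀ j : Fin (m - 1), 0 < x ⟨m + (j : ℕ), by have := j.isLt; omega⟩)
    (hwsum : ∑ j : Fin (m - 1), x ⟨m + (j : ℕ), by have := j.isLt; omega⟩ < 1) :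
    (kappaMapH m l x).coeff (2 * m) = 1 ∧
    (kappaMapH m l x).coeff (2 * m - 1) = -l ∧
    |(Matrix.of fun i j : Fin (2 * m - 1) =>
        deriv (fun t => (kappaMapH m l (Function.update x j t)).coeff (i : ℕ)) (x j)).det| =
      2 ^ m * l ^ (m - 1) * (∏ j, lam j) *
        ∏ j : Fin m, ∏ k ∈ Finset.Ioi j, |lam j ^ 2 - lam k ^ 2| ^ 2 := by
  obtain ⟨n, rfl⟩ : ∃ n, m = n + 1 := ⟨m - 1, by omega⟩
  subst hlam
  have hord' : StrictAnti (fun k : Fin (n + 1) => x (eL n k)) := hord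
  have hpos' : ∀ j : Fin (n + 1), 0 < x (eL n j) := hpos
  -- the first coefficient claim
  have hQc : (∏ j : Fin (n + 1), (X - C (x (eL n j) ^ 2))).coeff (n + 1) = 1 := by
    have hmon : (∏ j : Fin (n + 1), (X - C (x (eL n j) ^ 2))).Monic :=
      monic_prod_of_monic _ _ fun j _ => monic_X_sub_C _
    have hdeg : (∏ j : Fin (n + 1), (X - C (x (eL n j) ^ 2))).natDegree = n + 1 := by
      rw [natDegree_prod_of_monic _ _ fun j _ => monic_X_sub_C _]
      simp only [Polynomial.natDegree_X_sub_C, Finset.sum_const, Finset.card_univ,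
        Fintype.card_fin, smul_eq_mul, mul_one]
    have := hmon.coeff_natDegree
    rwa [hdeg] at this
  have conj1 : (kappaMapH (n + 1) l x).coeff (2 * (n + 1)) = 1 := by
    rw [kappaMapH_eq, kappaPolyH_expand, coeff_sub, coeff_exp_even, coeff_CXexp_even,
      sub_zero]
    exact hQc
  have conj2 : (kappaMapH (n + 1) l x).coeff (2 * (n + 1) - 1) = -l := by
    have hidx : 2 * (n + 1) - 1 = 2 * n + 1 := by omega
    rw [kappaMapH_eq, kappaPolyH_expand, hidx, coeff_sub, coeff_exp_odd, coeff_CXexp_odd,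
      zero_sub, Polynomial.finset_sum_coeff]
    have hterm : ∀ j : Fin (n + 1),
        (C (wfun n x j) * qpoly (fun k => x (eL n k) ^ 2) j).coeff n = wfun n x j := by
      intro j
      have h := qpoly_coeff_top (fun k => x (eL n k) ^ 2) j
      norm_num at h
      rw [coeff_C_mul, h, mul_one]
    rw [Finset.sum_congr rfl fun j _ => hterm j, wsum_one, mul_one]
  refine ⟨conj1, conj2, ?_⟩
  -- identify the Jacobian matrix with the explicit coefficient matrix
  have hJ : (Matrix.of fun i j : Fin (2 * (n + 1) - 1) =>
      deriv (fun t => (kappaMapH (n + 1) l (Function.update x j t)).coeff (i : ℕ)) (x j)) =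
      Matrix.of fun i j : Fin (2 * (n + 1) - 1) => (cpDef n l x j).coeff (i : ℕ) := by
    ext i j
    simp only [Matrix.of_apply]
    by_cases h : (j : ℕ) < n + 1
    · have hj : j = eL n ⟨(j : ℕ), h⟩ := Fin.ext rfl
      rw [hj, jac_entry_lam n l x (i : ℕ) ⟨(j : ℕ), h⟩, cpDef_eL]
    · have hj : j = eW n ⟨(j : ℕ) - (n + 1), by have := j.isLt; omega⟩ := by
        apply Fin.ext
        rw [show ((eW n ⟨(j : ℕ) - (n + 1), by have := j.isLt; omega⟩ : Fin _) : ℕ) =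
          n + 1 + ((j : ℕ) - (n + 1)) from rfl]
        omega
      rw [hj, jac_entry_w n l x (i : ℕ), cpDef_eW]
  rw [hJ]
  refine abs_det_main n l hl _ hpos' hord' (cpDef n l x) ?_ ?_ ?_
  · intro j i
    rw [cpDef_eL, coeff_C_mul, coeff_sub, Qf_expand, coeff_exp_even, Rf_expand,
      coeff_CXexp_even, sub_zero]
  · intro j i
    rw [cpDef_eW, coeff_neg]
    have : Qf (fun k => x (eL n k)) j.castSucc - Qf (fun k => x (eL n k)) (Fin.last n) =
        (Polynomial.expand ℝ 2) (qpoly (fun k => x (eL n k) ^ 2) j.castSucc -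
          qpoly (fun k => x (eL n k) ^ 2) (Fin.last n)) := by
      rw [map_sub, Qf_expand, Qf_expand]
    rw [this, coeff_CXexp_even, neg_zero]
  · intro j i
    rw [cpDef_eW, coeff_neg]
    have : Qf (fun k => x (eL n k)) j.castSucc - Qf (fun k => x (eL n k)) (Fin.last n) =
        (Polynomial.expand ℝ 2) (qpoly (fun k => x (eL n k) ^ 2) j.castSucc -
          qpoly (fun k => x (eL n k) ^ 2) (Fin.last n)) := by
      rw [map_sub, Qf_expand, Qf_expand]
    rw [this, coeff_CXexp_odd, coeff_sub]
    ring
end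

section
/- Fix l > 0 and n ≥ 1. For λ = (λ₁,…,λ_n) with λ₁ > ⋯ > λ_n > 0 and w = (w₁,…,w_n) with w_j > 0 and Σ_{j=1}^n w_j < 1, set λ₀ = 0 and w₀ = 1 − Σ_{j=1}^n w_j, and define real numbers κ₀(λ,w),…,κ_{2n+1}(λ,w) as the coefficients of the polynomial identity Σ_{j=0}^{2n+1} κ_j z^j = z·∏_{j=1}^n (z² − λ_j²) − l·Σ_{j=0}^n w_j ∏_{0≤k≤n, k≠j} (z² − λ_k²). (When (λ_j, w_j) are the data of the spectral measure w₀δ₀ + Σ (w_j/2)(δ_{λ_j}+δ_{−λ_j}) of a (2n+1)×(2n+1) zero-diagonal Jacobi matrix 𝒥 with positive off-diagonals, this polynomial equals det(zI − 𝒥 − l·I_{1×1}); in particular κ_{2n+1} = 1 and κ_{2n} = −l.) Then |det ∂(κ₀,…,κ_{2n−1})/∂(λ₁,…,λ_n,w₁,…,w_n)| = 2^n l^n ∏_{j=1}^n λ_j³ · ∏_{1≤j<k≤n} |λ_j² − λ_k²|². -/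
open MeasureTheory Matrix Polynomial Finset

/-- The polynomial `z·∏ (z² - λ_j²) - l·Σ_{j=0}^n w_j ∏_{k≠j} (z² - λ_k²)` (with `λ₀ = 0`),
which is `det(zI - 𝒥 - l·I₁ₓ₁)` when `(λ_j, w_j)` are the data of the spectral measure
`w₀δ₀ + Σ (w_j/2)(δ_{λ_j}+δ_{-λ_j})` of a `(2n+1) × (2n+1)` zero-diagonal Jacobi matrix. -/
noncomputable def kappaPolyO (n : ℕ) (l : ℝ) (lam : Fin n → ℝ) (w : Fin n → ℝ) (w₀ : ℝ) :
    Polynomial ℝ :=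
  X * ∏ j : Fin n, (X ^ 2 - C (lam j ^ 2)) -
    C l * (C w₀ * ∏ j : Fin n, (X ^ 2 - C (lam j ^ 2)) +
      ∑ j : Fin n, C (w j) * X ^ 2 * ∏ k ∈ Finset.univ.erase j, (X ^ 2 - C (lam k ^ 2)))

/-- `kappaPolyO` as a function of a single vector `x ∈ ℝ^(2n)` of variables
`(λ₁,…,λ_n, w₁,…,w_n)`, with `w₀ := 1 - Σ_j w_j`. -/
noncomputable def kappaMapO (n : ℕ) (l : ℝ) (x : Fin (2 * n) → ℝ) : Polynomial ℝ :=
  kappaPolyO n l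
    (fun j : Fin n => x ⟨(j : ℕ), by have := j.isLt; omega⟩)
    (fun j : Fin n => x ⟨n + (j : ℕ), by have := j.isLt; omega⟩)
    (1 - ∑ k : Fin n, x ⟨n + (k : ℕ), by have := k.isLt; omega⟩)

open Lagrange Function

/-!
Write `μ_j = λ_j²`, `Q = ∏_k (y - μ_k)` and `Q_j = ∏_{k ≠ j} (y - μ_k)`. Since
`z² Q_j(z²) = Q(z²) + μ_j Q_j(z²)`, substituting `w₀ = 1 - Σ w_j` turns the polynomial into
`z Q(z²) - l (Q(z²) + Σ_j w_j μ_j Q_j(z²))`. So `κ_{2r+1} = [Q]_r` does not depend on `w`, with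
`∂κ_{2r+1}/∂λ_j = -2λ_j [Q_j]_r`, and `∂κ_{2r}/∂w_j = -l μ_j [Q_j]_r`. With rows ordered as
(odd, even) and columns as (λ, w) the Jacobian is block lower triangular, with diagonal blocks
`D · diag(-2λ_j)` and `D · diag(-l μ_j)` where `D_{rj} = [Q_j]_r`. Finally
`V(μ) · D = diag(Q_j(μ_j))` for the Vandermonde matrix `V(μ)`, and
`|∏_j Q_j(μ_j)| = |det V(μ)|²`, so `|det D| = |det V(μ)| = ∏_{j<k} |μ_j - μ_k|`.
-/

namespace Polynomial

variable {R : Type*} [CommSemiring R]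

lemma coeff_expand_two_two_mul_add_one (p : R[X]) (r : ℕ) :
    (expand R 2 p).coeff (2 * r + 1) = 0 := by
  rw [coeff_expand two_pos, if_neg (by omega)]

lemma coeff_X_mul_expand_two_two_mul_add_one (p : R[X]) (r : ℕ) :
    (X * expand R 2 p).coeff (2 * r + 1) = p.coeff r := by
  rw [coeff_X_mul, coeff_expand_mul' two_pos]

lemma coeff_X_mul_expand_two_two_mul (p : R[X]) (r : ℕ) :
    (X * expand R 2 p).coeff (2 * r) = 0 := by
  cases r with
  | zero => exact coeff_X_mul_zero _
  | succ r => rw [mul_add_one, coeff_X_mul, coeff_expand_two_two_mul_add_one]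

end Polynomial

section Nodal

variable {R ι : Type*} {n : ℕ}

lemma coeff_nodal_card [CommRing R] [Nontrivial R] (s : Finset ι) (v : ι → R) :
    (nodal s v).coeff #s = 1 := by
  simpa [natDegree_nodal] using (nodal_monic (s := s) (v := v)).coeff_natDegree

lemma coeff_nodal_erase_card [CommRing R] [Nontrivial R] [DecidableEq ι]
    {s : Finset ι} {i : ι} (hi : i ∈ s) (v : ι → R) : (nodal (s.erase i) v).coeff #s = 0 :=
  coeff_eq_zero_of_natDegree_lt (by simpa [natDegree_nodal] using card_erase_lt_of_mem hi)

lemma hasDerivAt_coeff_nodal_update {𝕜 : Type*} [NontriviallyNormedField 𝕜] [DecidableEq ι]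
    {s : Finset ι} {m : ι} (hm : m ∈ s) (μ : ι → 𝕜) (r : ℕ) (a : 𝕜) :
    HasDerivAt (fun a => (nodal s (update μ m a)).coeff r) (-(nodal (s.erase m) μ).coeff r) a := by
  have hnodal (a : 𝕜) : nodal s (update μ m a) = (X - C a) * nodal (s.erase m) μ := by
    rw [nodal_eq_mul_nodal_erase hm, update_self]
    congr 1
    exact prod_congr rfl fun k hk => by rw [update_of_ne (ne_of_mem_erase hk)]
  simp_rw [hnodal, sub_mul, coeff_sub, coeff_C_mul]
  simpa using ((hasDerivAt_id a).mul_const _).const_sub _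

noncomputable def nodalEraseCoeffMatrix [CommRing R] (μ : Fin n → R) : Matrix (Fin n) (Fin n) R :=
  of fun r j => (nodal (univ.erase j) μ).coeff r

lemma vandermonde_mul_nodalEraseCoeffMatrix [CommRing R] [Nontrivial R] (μ : Fin n → R) :
    vandermonde μ * nodalEraseCoeffMatrix μ =
      diagonal fun j => ∏ k ∈ univ.erase j, (μ j - μ k) := by
  ext i j
  have hdeg : (nodal (univ.erase j) μ).natDegree < n := by
    simpa [natDegree_nodal] using card_erase_lt_of_mem (mem_univ j)
  rw [mul_apply, diagonal_apply]
  trans (nodal (univ.erase j) μ).eval (μ i)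
  · rw [eval_eq_sum_range' hdeg, ← Fin.sum_univ_eq_sum_range]
    exact sum_congr rfl fun k _ => by simp [nodalEraseCoeffMatrix, vandermonde_apply, mul_comm]
  · split_ifs with hij
    · rw [hij, eval_nodal]
    · exact eval_nodal_at_node (mem_erase.2 ⟨hij, mem_univ i⟩)

lemma abs_det_nodalEraseCoeffMatrix [Field R] [LinearOrder R] [IsStrictOrderedRing R]
    {μ : Fin n → R} (hμ : Injective μ) :
    |(nodalEraseCoeffMatrix μ).det| = ∏ i, ∏ j ∈ Ioi i, |μ i - μ j| := by
  have habsV : |(vandermonde μ).det| = ∏ i, ∏ j ∈ Ioi i, |μ i - μ j| := by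
    simp only [det_vandermonde, abs_prod, abs_sub_comm]
  have hV : |(vandermonde μ).det| ≠ 0 := abs_ne_zero.2 (det_vandermonde_ne_zero_iff.2 hμ)
  refine mul_left_cancel₀ hV ?_
  rw [← abs_mul, ← det_mul, vandermonde_mul_nodalEraseCoeffMatrix, det_diagonal, habsV,
    ← prod_mul_distrib]
  simp only [abs_prod, ← compl_singleton, ← prod_prod_Ioi_mul_eq_prod_prod_off_diag,
    ← prod_mul_distrib]
  exact prod_congr rfl fun i _ => prod_congr rfl fun j _ => by rw [abs_mul, abs_sub_comm (μ j)]

end Nodal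

lemma hasDerivAt_sum_update_mul {𝕜 ι : Type*} [NontriviallyNormedField 𝕜] [Fintype ι]
    [DecidableEq ι] (w c : ι → 𝕜) (m : ι) (a : 𝕜) :
    HasDerivAt (fun a => ∑ j, update w m a j * c j) (c m) a := by
  have hsum := HasDerivAt.fun_sum (u := univ) fun j _ =>
    (hasDerivAt_pi.1 (hasDerivAt_update w m a) j).mul_const (c j)
  simpa [Pi.single_apply] using hsum

lemma kappaPolyO_eq (n : ℕ) (l : ℝ) (lam w : Fin n → ℝ) :
    kappaPolyO n l lam w (1 - ∑ j, w j) =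
      X * expand ℝ 2 (nodal univ fun j => lam j ^ 2) -
        expand ℝ 2 (C l * (nodal univ (fun j => lam j ^ 2) +
          ∑ j, C (w j * lam j ^ 2) * nodal (univ.erase j) fun j => lam j ^ 2)) := by
  have hexpand (s : Finset (Fin n)) :
      expand ℝ 2 (nodal s fun j => lam j ^ 2) = ∏ k ∈ s, (X ^ 2 - C (lam k ^ 2)) := by
    simp [nodal, map_prod]
  have hsplit (j : Fin n) : X ^ 2 * ∏ k ∈ univ.erase j, (X ^ 2 - C (lam k ^ 2)) =
      ∏ k, (X ^ 2 - C (lam k ^ 2)) +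
        C (lam j ^ 2) * ∏ k ∈ univ.erase j, (X ^ 2 - C (lam k ^ 2)) := by
    rw [← mul_prod_erase univ _ (mem_univ j)]
    ring
  simp only [kappaPolyO, map_mul, map_add, map_sum, expand_C, hexpand, mul_assoc, hsplit, mul_add,
    sum_add_distrib]
  simp only [← sum_mul, ← map_sum, map_sub, map_one]
  ring

lemma kappaPolyO_coeff_odd (n : ℕ) (l : ℝ) (lam w : Fin n → ℝ) (r : ℕ) :
    (kappaPolyO n l lam w (1 - ∑ j, w j)).coeff (2 * r + 1) =
      (nodal univ fun j => lam j ^ 2).coeff r := by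
  rw [kappaPolyO_eq, coeff_sub, coeff_X_mul_expand_two_two_mul_add_one,
    coeff_expand_two_two_mul_add_one, sub_zero]

lemma kappaPolyO_coeff_even (n : ℕ) (l : ℝ) (lam w : Fin n → ℝ) (r : ℕ) :
    (kappaPolyO n l lam w (1 - ∑ j, w j)).coeff (2 * r) =
      -(l * ((nodal univ fun j => lam j ^ 2).coeff r +
        ∑ j, w j * (lam j ^ 2 * (nodal (univ.erase j) fun j => lam j ^ 2).coeff r))) := by
  rw [kappaPolyO_eq, coeff_sub, coeff_X_mul_expand_two_two_mul, coeff_expand_mul' two_pos,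
    coeff_C_mul, coeff_add, finsetSum_coeff, zero_sub]
  simp only [coeff_C_mul, mul_assoc]

def finSumFinEquivTwoMul (n : ℕ) : Fin n ⊕ Fin n ≃ Fin (2 * n) :=
  finSumFinEquiv.trans (finCongr (two_mul n).symm)

noncomputable def finSumFinEquivOddEven (n : ℕ) : Fin n ⊕ Fin n ≃ Fin (2 * n) :=
  Equiv.ofBijective (Sum.elim (fun r => ⟨2 * r + 1, by omega⟩) fun r => ⟨2 * r, by omega⟩) <| by
    refine (Fintype.bijective_iff_injective_and_card _).2 ⟨?_, by simp [two_mul]⟩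
    rintro (a | a) (b | b) h <;> simp [Fin.ext_iff] at h ⊢ <;> omega

@[simp]
lemma val_finSumFinEquivOddEven_inl {n : ℕ} (r : Fin n) :
    (finSumFinEquivOddEven n (.inl r) : ℕ) = 2 * r + 1 := rfl

@[simp]
lemma val_finSumFinEquivOddEven_inr {n : ℕ} (r : Fin n) :
    (finSumFinEquivOddEven n (.inr r) : ℕ) = 2 * r := rfl

noncomputable def kappaJacobian (n : ℕ) (l : ℝ) (x : Fin (2 * n) → ℝ) :
    Matrix (Fin (2 * n)) (Fin (2 * n)) ℝ :=
  of fun i j => deriv (fun t => (kappaMapO n l (update x j t)).coeff i) (x j)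

section Jacobian

variable {n : ℕ} (l : ℝ) (x : Fin (2 * n) → ℝ)

local notation "e" => finSumFinEquivTwoMul n

lemma kappaMapO_coeff_odd (r : ℕ) :
    (kappaMapO n l x).coeff (2 * r + 1) = (nodal univ fun j => x (e (.inl j)) ^ 2).coeff r :=
  kappaPolyO_coeff_odd ..

lemma kappaMapO_coeff_even (r : ℕ) :
    (kappaMapO n l x).coeff (2 * r) =
      -(l * ((nodal univ fun j => x (e (.inl j)) ^ 2).coeff r + ∑ j, x (e (.inr j)) *
        (x (e (.inl j)) ^ 2 * (nodal (univ.erase j) fun j => x (e (.inl j)) ^ 2).coeff r))) :=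
  kappaPolyO_coeff_even ..

lemma kappaMapO_coeff_two_mul_add_one : (kappaMapO n l x).coeff (2 * n + 1) = 1 := by
  simpa [kappaMapO_coeff_odd] using coeff_nodal_card univ fun j => x (e (.inl j)) ^ 2

lemma kappaMapO_coeff_two_mul : (kappaMapO n l x).coeff (2 * n) = -l := by
  have hlead : (nodal univ fun j => x (e (.inl j)) ^ 2).coeff n = 1 := by
    simpa using coeff_nodal_card univ fun j => x (e (.inl j)) ^ 2
  have hlead_erase (j : Fin n) :
      (nodal (univ.erase j) fun j => x (e (.inl j)) ^ 2).coeff n = 0 := by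
    simpa using coeff_nodal_erase_card (mem_univ j) fun j => x (e (.inl j)) ^ 2
  simp [kappaMapO_coeff_even, hlead, hlead_erase]

lemma toBlocks₁₁_kappaJacobian :
    ((kappaJacobian n l x).submatrix (finSumFinEquivOddEven n) e).toBlocks₁₁ =
      nodalEraseCoeffMatrix (fun j => x (e (.inl j)) ^ 2) *
        diagonal fun j => -(2 * x (e (.inl j))) := by
  ext r m
  have hupd (t : ℝ) : (fun j => update x (e (.inl m)) t (e (.inl j)) ^ 2) =
      update (fun j => x (e (.inl j)) ^ 2) m (t ^ 2) := by
    ext j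
    by_cases hj : j = m <;> simp [hj]
  simp only [toBlocks₁₁, kappaJacobian, submatrix_apply, of_apply, val_finSumFinEquivOddEven_inl,
    kappaMapO_coeff_odd, hupd, mul_diagonal, nodalEraseCoeffMatrix]
  have hderiv := (hasDerivAt_coeff_nodal_update (mem_univ m) (fun j => x (e (.inl j)) ^ 2) r _).comp
    (x (e (.inl m))) (hasDerivAt_pow 2 (x (e (.inl m))))
  exact hderiv.deriv.trans (by ring)

lemma toBlocks₁₂_kappaJacobian :
    ((kappaJacobian n l x).submatrix (finSumFinEquivOddEven n) e).toBlocks₁₂ = 0 := by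
  ext r m
  have hlam (t : ℝ) (j : Fin n) : update x (e (.inr m)) t (e (.inl j)) = x (e (.inl j)) :=
    update_of_ne ((Equiv.injective e).ne Sum.inl_ne_inr) _ _
  simp only [toBlocks₁₂, kappaJacobian, submatrix_apply, of_apply, val_finSumFinEquivOddEven_inl,
    kappaMapO_coeff_odd, hlam, deriv_const, Matrix.zero_apply]

lemma toBlocks₂₂_kappaJacobian :
    ((kappaJacobian n l x).submatrix (finSumFinEquivOddEven n) e).toBlocks₂₂ =
      nodalEraseCoeffMatrix (fun j => x (e (.inl j)) ^ 2) *
        diagonal fun j => -(l * x (e (.inl j)) ^ 2) := by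
  ext r m
  have hlam (t : ℝ) (j : Fin n) : update x (e (.inr m)) t (e (.inl j)) = x (e (.inl j)) :=
    update_of_ne ((Equiv.injective e).ne Sum.inl_ne_inr) _ _
  have hw (t : ℝ) (j : Fin n) :
      update x (e (.inr m)) t (e (.inr j)) = update (fun j => x (e (.inr j))) m t j :=
    update_apply_of_injective x ((Equiv.injective e).comp Sum.inr_injective) m t j
  simp only [toBlocks₂₂, kappaJacobian, submatrix_apply, of_apply, val_finSumFinEquivOddEven_inr,
    kappaMapO_coeff_even, hlam, hw, mul_diagonal, nodalEraseCoeffMatrix]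
  exact (((hasDerivAt_sum_update_mul _ _ m _).const_add _).const_mul l).neg.deriv.trans (by ring)

lemma det_kappaJacobian_submatrix :
    ((kappaJacobian n l x).submatrix (finSumFinEquivOddEven n) e).det =
      (nodalEraseCoeffMatrix fun j => x (e (.inl j)) ^ 2).det ^ 2 *
        ∏ j, (2 * l * x (e (.inl j)) ^ 3) := by
  rw [← fromBlocks_toBlocks ((kappaJacobian n l x).submatrix _ _), toBlocks₁₂_kappaJacobian,
    det_fromBlocks_zero₁₂, toBlocks₁₁_kappaJacobian, toBlocks₂₂_kappaJacobian, det_mul, det_mul,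
    det_diagonal, det_diagonal]
  have hdiag : ∏ j, (2 * l * x (e (.inl j)) ^ 3) =
      (∏ j, -(2 * x (e (.inl j)))) * ∏ j, -(l * x (e (.inl j)) ^ 2) := by
    rw [← prod_mul_distrib]
    exact prod_congr rfl fun j _ => by ring
  rw [hdiag]
  ring

end Jacobian

/-- the Jacobian of the change of variables
`(λ₁,…,λ_n, w₁,…,w_n) ↦ (κ₀,…,κ_{2n-1})` (Maclaurin coefficients of
`det(zI - 𝒥 - l·I₁ₓ₁)` in the odd case) has absolute value
`2^n l^n ∏ λ_j³ ∏_{j<k} |λ_j² - λ_k²|²`; moreover `κ_{2n+1} = 1` and `κ_{2n} = -l`. -/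
theorem jacobian_hermitian_odd (n : ℕ) (l : ℝ) (hl : 0 < l)
    (x : Fin (2 * n) → ℝ)
    (lam : Fin n → ℝ) (hlam : lam = fun j : Fin n => x ⟨(j : ℕ), by have := j.isLt; omega⟩)
    (hord : StrictAnti lam) (hpos : ∀ j, 0 < lam j) :
    (kappaMapO n l x).coeff (2 * n + 1) = 1 ∧
    (kappaMapO n l x).coeff (2 * n) = -l ∧
    |(Matrix.of fun i j : Fin (2 * n) =>
        deriv (fun t => (kappaMapO n l (Function.update x j t)).coeff (i : ℕ)) (x j)).det| =
      2 ^ n * l ^ n * (∏ j, lam j ^ 3) *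
        ∏ j : Fin n, ∏ k ∈ Finset.Ioi j, |lam j ^ 2 - lam k ^ 2| ^ 2 := by
  have hsq : Injective fun j => lam j ^ 2 := fun i j h =>
    hord.injective ((sq_eq_sq₀ (hpos i).le (hpos j).le).1 h)
  have hdet : ((kappaJacobian n l x).submatrix (finSumFinEquivOddEven n)
      (finSumFinEquivTwoMul n)).det =
      (nodalEraseCoeffMatrix fun j => lam j ^ 2).det ^ 2 * ∏ j, (2 * l * lam j ^ 3) := by
    subst hlam
    exact det_kappaJacobian_submatrix l x
  refine ⟨kappaMapO_coeff_two_mul_add_one l x, kappaMapO_coeff_two_mul l x, ?_⟩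
  change |(kappaJacobian n l x).det| = _
  rw [← abs_det_submatrix_equiv_equiv (finSumFinEquivOddEven n) (finSumFinEquivTwoMul n), hdet,
    abs_mul, abs_pow, abs_det_nodalEraseCoeffMatrix hsq,
    abs_of_pos (prod_pos fun j _ => by have := hpos j; positivity), prod_mul_distrib,
    prod_mul_distrib, prod_const, prod_const, card_univ, Fintype.card_fin]
  simp only [← prod_pow]
  ring
end

section
/- Let N ≥ 2, let a₁,…,a_{N−1} ∈ ℝ, let l ∈ ℂ, and set 𝒥 = 𝒥(a) and 𝒥_l = 𝒥 + l·I_{1×1}. Then for every z ∈ ℂ, det(zI − 𝒥_l) + (−1)^N det(−zI − 𝒥_l) = 2·det(zI − 𝒥). In particular, when N = 2m, l > 0 and the eigenvalues of 𝒥 are ±λ₁,…,±λ_m while those of 𝒥_l are z₁,…,z_{2m}, this reads ∏_{j=1}^m (z² − λ_j²) = (1/2)∏_{k=1}^{2m} (z − z_k) + (1/2)∏_{k=1}^{2m} (z + z_k); and when N = 2n+1 with eigenvalues 0, ±λ₁,…,±λ_n of 𝒥 and z₁,…,z_{2n+1} of 𝒥_l, it reads z·∏_{k=1}^n (z² − λ_k²)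 = (1/2)∏_{k=1}^{2n+1} (z − z_k) + (1/2)∏_{k=1}^{2n+1} (z + z_k). -/
open MeasureTheory Matrix Polynomial Finset

/-- The `N × N` zero-diagonal Jacobi matrix with off-diagonal entries `a 0, a 1, ...`
(`a k` sits in entries `(k, k+1)` and `(k+1, k)`, i.e. `a (j-1)` is the paper's `a_j`). -/
noncomputable def jacobiM (N : ℕ) (a : ℕ → ℝ) : Matrix (Fin N) (Fin N) ℝ :=
  Matrix.of fun i j =>
    if (i : ℕ) + 1 = (j : ℕ) then a i else if (j : ℕ) + 1 = (i : ℕ) then a j else 0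

/-- The matrix with `1` in the `(1,1)` entry (index `0`) and zeros elsewhere, i.e. `e₁e₁ᵀ`. -/
noncomputable def E11K (N : ℕ) (K : Type*) [Zero K] [One K] : Matrix (Fin N) (Fin N) K :=
  Matrix.of fun i j => if (i : ℕ) = 0 ∧ (j : ℕ) = 0 then 1 else 0

/-- `z₁ > -z₂ > z₃ > ⋯ > (-1)^(N-1) z_N > 0`: the sequence `(-1)^(j-1) z_j` is strictly
decreasing and positive. -/
def AltOrdered (N : ℕ) (z : Fin N → ℝ) : Prop :=
  StrictAnti (fun j : Fin N => (-1 : ℝ) ^ (j : ℕ) * z j) ∧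
  ∀ h : 0 < N, 0 < (-1 : ℝ) ^ (N - 1) * z ⟨N - 1, Nat.sub_lt h Nat.one_pos⟩

/-! Conjugation by `diag(1, -1, 1, …)` negates every matrix supported on the entries with
`i + j` odd, such as `𝒥`, and fixes diagonal matrices; hence
`(-1)^N det(-zI - 𝒥_l) = det(zI - 𝒥 + l·I₁ₓ₁)`. Expanding along the first row,
`det(zI - 𝒥 + c·I₁ₓ₁)` is affine in `c`, so its values at `c = ±l` average to its value
at `c = 0`. The factored forms follow by evaluating both characteristic polynomials at `±z`. -/

section SingleEntryPerturbation

variable {n R : Type*} [Fintype n] [DecidableEq n] [CommRing R]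

theorem det_add_smul_single_self (M : Matrix n n R) (i : n) (c : R) :
    (M + c • single i i 1).det = M.det + c * (M.updateRow i (Pi.single i 1)).det := by
  have hrow : M + c • single i i 1 = M.updateRow i (M i + c • Pi.single i 1) := by
    ext k j
    rcases eq_or_ne k i with rfl | hk
    · rcases eq_or_ne j k with rfl | hj
      · simp
      · simp [hj, Ne.symm hj]
    · simp [hk, Ne.symm hk]
  rw [hrow, det_updateRow_add, det_updateRow_smul, updateRow_eq_self]

theorem det_sub_smul_single_self_add_det_add (M : Matrix n n R) (i : n) (c : R) :
    (M - c • single i i 1).det + (M + c • single i i 1).det = 2 * M.det := by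
  rw [sub_eq_add_neg, ← neg_smul, det_add_smul_single_self, det_add_smul_single_self]
  ring

end SingleEntryPerturbation

def altSignDiag (R : Type*) [CommRing R] (N : ℕ) : Matrix (Fin N) (Fin N) R :=
  diagonal fun i => (-1) ^ (i : ℕ)

section AltSign

variable {R : Type*} [CommRing R] {N : ℕ}

theorem altSignDiag_mul_self : altSignDiag R N * altSignDiag R N = 1 := by
  simp [altSignDiag, ← pow_add, ← two_mul, pow_mul]

theorem det_altSignDiag_conj (M : Matrix (Fin N) (Fin N) R) :
    (altSignDiag R N * M * altSignDiag R N).det = M.det := by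
  rw [det_mul, det_mul, mul_right_comm, ← det_mul, altSignDiag_mul_self, det_one, one_mul]

theorem altSignDiag_conj_apply (M : Matrix (Fin N) (Fin N) R) (i j : Fin N) :
    (altSignDiag R N * M * altSignDiag R N) i j = (-1) ^ ((i : ℕ) + j) * M i j := by
  rw [altSignDiag, mul_diagonal, diagonal_mul, pow_add]
  ring

theorem altSignDiag_conj_of_isDiag {D : Matrix (Fin N) (Fin N) R} (hD : D.IsDiag) :
    altSignDiag R N * D * altSignDiag R N = D := by
  ext i j
  rw [altSignDiag_conj_apply]
  rcases eq_or_ne i j with rfl | hij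
  · simp [← two_mul, pow_mul]
  · simp [hD hij]

theorem altSignDiag_conj_of_even_eq_zero {M : Matrix (Fin N) (Fin N) R}
    (hM : ∀ i j : Fin N, Even ((i : ℕ) + j) → M i j = 0) :
    altSignDiag R N * M * altSignDiag R N = -M := by
  ext i j
  rw [altSignDiag_conj_apply, neg_apply]
  rcases Nat.even_or_odd ((i : ℕ) + j) with h | h
  · simp [hM i j h]
  · simp [h.neg_one_pow]

end AltSign

theorem jacobiM_apply_eq_zero_of_even {N : ℕ} (a : ℕ → ℝ) {i j : Fin N}
    (h : Even ((i : ℕ) + j)) : jacobiM N a i j = 0 := by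
  have hij : (i : ℕ) + 1 ≠ j := by grind
  have hji : (j : ℕ) + 1 ≠ i := by grind
  simp only [jacobiM, of_apply, if_neg hij, if_neg hji]

theorem E11K_eq_single (R : Type*) [CommRing R] (N : ℕ) :
    E11K (N + 1) R = single 0 0 1 := by
  ext i j
  simp only [E11K, single_apply, of_apply, Fin.ext_iff, Fin.val_zero, eq_comm]

theorem isDiag_E11K (R : Type*) [CommRing R] (N : ℕ) : (E11K N R).IsDiag := by
  intro i j hij
  simp only [E11K, of_apply, ite_eq_right_iff, and_imp]
  intro hi hj
  exact absurd (Fin.ext (hi.trans hj.symm)) hij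

theorem det_smul_one_sub_add_neg_one_pow_mul_det_neg_smul_one_sub {R : Type*} [CommRing R]
    {N : ℕ} (J : Matrix (Fin N) (Fin N) R)
    (hJ : ∀ i j : Fin N, Even ((i : ℕ) + j) → J i j = 0)
    (l z : R) :
    (z • (1 : Matrix (Fin N) (Fin N) R) - (J + l • E11K N R)).det
      + (-1) ^ N * ((-z) • (1 : Matrix (Fin N) (Fin N) R) - (J + l • E11K N R)).det
      = 2 * (z • (1 : Matrix (Fin N) (Fin N) R) - J).det := by
  rcases N with _ | N
  · norm_num [det_isEmpty]
  set A := z • (1 : Matrix (Fin (N + 1)) (Fin (N + 1)) R) - J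
  have hD : ((-z) • (1 : Matrix (Fin (N + 1)) (Fin (N + 1)) R) - l • E11K (N + 1) R).IsDiag :=
    (isDiag_smul_one _ _).sub ((isDiag_E11K R _).smul l)
  have hflip : ((-z) • 1 - (J + l • E11K (N + 1) R)).det
      = (-1) ^ (N + 1) * (A + l • E11K (N + 1) R).det := by
    rw [← det_altSignDiag_conj, sub_add_eq_sub_sub_swap, Matrix.mul_sub, Matrix.sub_mul,
      altSignDiag_conj_of_isDiag hD, altSignDiag_conj_of_even_eq_zero hJ,
      show (-z) • 1 - l • E11K (N + 1) R - -J = -(A + l • E11K (N + 1) R) by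
        simp only [A, neg_smul]; abel,
      det_neg, Fintype.card_fin]
  rw [hflip, sub_add_eq_sub_sub, E11K_eq_single, ← mul_assoc, ← mul_pow]
  simpa using det_sub_smul_single_self_add_det_add A 0 l

theorem eval_charpoly_eq_det_smul_one_sub {n R : Type*} [Fintype n] [DecidableEq n] [CommRing R]
    (M : Matrix n n R) (t : R) : M.charpoly.eval t = (t • (1 : Matrix n n R) - M).det := by
  rw [eval_charpoly, scalar_apply, smul_one_eq_diagonal]

theorem neg_one_pow_card_mul_eval_neg_prod_X_sub_C {ι R : Type*} [Fintype ι] [CommRing R]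
    (zs : ι → R) (z : R) :
    (-1) ^ Fintype.card ι * (∏ k, (X - C (zs k))).eval (-z) = ∏ k, (z + zs k) := by
  rw [eval_prod, ← Finset.card_univ, ← prod_const, ← prod_mul_distrib]
  exact prod_congr rfl fun k _ => by simp only [eval_sub, eval_X, eval_C]; ring

theorem charpoly_symmetrization_identity_general (N : ℕ) (a : ℕ → ℝ) (l : ℂ)
    (Jc : Matrix (Fin N) (Fin N) ℂ) (hJc : Jc = (jacobiM N a).map (algebraMap ℝ ℂ))
    (Ml : Matrix (Fin N) (Fin N) ℂ) (hMl : Ml = Jc + l • E11K N ℂ) :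
    (∀ z : ℂ,
      (z • (1 : Matrix (Fin N) (Fin N) ℂ) - Ml).det
        + (-1 : ℂ) ^ N * ((-z) • (1 : Matrix (Fin N) (Fin N) ℂ) - Ml).det
      = 2 * (z • (1 : Matrix (Fin N) (Fin N) ℂ) - Jc).det) ∧
    (∀ (m : ℕ), N = 2 * m → ∀ (lr : ℝ), 0 < lr → l = (lr : ℂ) →
      ∀ (lam : Fin m → ℝ) (zs : Fin (2 * m) → ℂ),
        Jc.charpoly = ∏ j : Fin m, ((X - C (lam j : ℂ)) * (X + C (lam j : ℂ))) →
        Ml.charpoly = ∏ k : Fin (2 * m), (X - C (zs k)) →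
        ∀ z : ℂ, ∏ j : Fin m, (z ^ 2 - (lam j : ℂ) ^ 2)
          = (1 / 2) * ∏ k : Fin (2 * m), (z - zs k)
            + (1 / 2) * ∏ k : Fin (2 * m), (z + zs k)) ∧
    (∀ (n : ℕ), N = 2 * n + 1 → ∀ (lr : ℝ), 0 < lr → l = (lr : ℂ) →
      ∀ (lam : Fin n → ℝ) (zs : Fin (2 * n + 1) → ℂ),
        Jc.charpoly = X * ∏ j : Fin n, ((X - C (lam j : ℂ)) * (X + C (lam j : ℂ))) →
        Ml.charpoly = ∏ k : Fin (2 * n + 1), (X - C (zs k)) →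
        ∀ z : ℂ, z * ∏ j : Fin n, (z ^ 2 - (lam j : ℂ) ^ 2)
          = (1 / 2) * ∏ k : Fin (2 * n + 1), (z - zs k)
            + (1 / 2) * ∏ k : Fin (2 * n + 1), (z + zs k)) := by
  have hJ : ∀ i j : Fin N, Even ((i : ℕ) + j) → Jc i j = 0 := fun i j h => by
    simp [hJc, jacobiM_apply_eq_zero_of_even a h]
  have hsym := det_smul_one_sub_add_neg_one_pow_mul_det_neg_smul_one_sub Jc hJ l
  rw [← hMl] at hsym
  have hroots : ∀ zs : Fin N → ℂ, Ml.charpoly = ∏ k, (X - C (zs k)) → ∀ z : ℂ,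
      Jc.charpoly.eval z = 1 / 2 * ∏ k, (z - zs k) + 1 / 2 * ∏ k, (z + zs k) := by
    intro zs hM z
    have h := hsym z
    simp only [← eval_charpoly_eq_det_smul_one_sub, hM] at h
    have hneg := neg_one_pow_card_mul_eval_neg_prod_X_sub_C zs z
    rw [Fintype.card_fin] at hneg
    rw [hneg, eval_prod] at h
    simp only [eval_sub, eval_X, eval_C] at h
    linear_combination -h / 2
  refine ⟨hsym, ?_, ?_⟩
  · rintro m rfl - - - lam zs hJ hM z
    rw [← hroots zs hM, hJ, eval_prod]
    simp [sq_sub_sq, mul_comm]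
  · rintro n rfl - - - lam zs hJ hM z
    rw [← hroots zs hM, hJ, eval_mul, eval_prod]
    simp [sq_sub_sq, mul_comm]

/-- for the rank-one perturbation `𝒥_l = 𝒥(a) + l·I₁ₓ₁` (with `l ∈ ℂ`),
`det(zI - 𝒥_l) + (-1)^N det(-zI - 𝒥_l) = 2 det(zI - 𝒥)` for all `z ∈ ℂ`.  In particular,
if `N = 2m`, `l > 0`, the eigenvalues of `𝒥` are `±λ₁,…,±λ_m` and those of `𝒥_l` are
`z₁,…,z_{2m}`, then `∏ (z² - λ_j²) = ½∏(z - z_k) + ½∏(z + z_k)`; and if `N = 2n+1` with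
eigenvalues `0, ±λ₁,…,±λ_n` of `𝒥` and `z₁,…,z_{2n+1}` of `𝒥_l`, then
`z·∏(z² - λ_k²) = ½∏(z - z_k) + ½∏(z + z_k)`. -/
theorem charpoly_symmetrization_identity (N : ℕ) (hN : 2 ≤ N) (a : ℕ → ℝ) (l : ℂ)
    (Jc : Matrix (Fin N) (Fin N) ℂ) (hJc : Jc = (jacobiM N a).map (algebraMap ℝ ℂ))
    (Ml : Matrix (Fin N) (Fin N) ℂ) (hMl : Ml = Jc + l • E11K N ℂ) :
    (∀ z : ℂ,
      (z • (1 : Matrix (Fin N) (Fin N) ℂ) - Ml).det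
        + (-1 : ℂ) ^ N * ((-z) • (1 : Matrix (Fin N) (Fin N) ℂ) - Ml).det
      = 2 * (z • (1 : Matrix (Fin N) (Fin N) ℂ) - Jc).det) ∧
    (∀ (m : ℕ), N = 2 * m → ∀ (lr : ℝ), 0 < lr → l = (lr : ℂ) →
      ∀ (lam : Fin m → ℝ) (zs : Fin (2 * m) → ℂ),
        Jc.charpoly = ∏ j : Fin m, ((X - C (lam j : ℂ)) * (X + C (lam j : ℂ))) →
        Ml.charpoly = ∏ k : Fin (2 * m), (X - C (zs k)) →
        ∀ z : ℂ, ∏ j : Fin m, (z ^ 2 - (lam j : ℂ) ^ 2)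
          = (1 / 2) * ∏ k : Fin (2 * m), (z - zs k)
            + (1 / 2) * ∏ k : Fin (2 * m), (z + zs k)) ∧
    (∀ (n : ℕ), N = 2 * n + 1 → ∀ (lr : ℝ), 0 < lr → l = (lr : ℂ) →
      ∀ (lam : Fin n → ℝ) (zs : Fin (2 * n + 1) → ℂ),
        Jc.charpoly = X * ∏ j : Fin n, ((X - C (lam j : ℂ)) * (X + C (lam j : ℂ))) →
        Ml.charpoly = ∏ k : Fin (2 * n + 1), (X - C (zs k)) →
        ∀ z : ℂ, z * ∏ j : Fin n, (z ^ 2 - (lam j : ℂ) ^ 2)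
          = (1 / 2) * ∏ k : Fin (2 * n + 1), (z - zs k)
            + (1 / 2) * ∏ k : Fin (2 * n + 1), (z + zs k)) :=
  charpoly_symmetrization_identity_general N a l Jc hJc Ml hMl
end
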